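/- arXiv:1812.09098 — 2 statements merged into one kernel-verified Lean document; each statement's English description precedes it below -/
import Mathlib

section
/- For all n ≥ 1, the (inv, des) q-Eulerian polynomials A_n^{des,inv}(t,q) = ∑_{π ∈ S_n} t^{des(π)} q^{inv(π)} satisfy the quadratic recursion A_{n+1}^{des,inv}(t,q) = (1 + t q^n) A_n^{des,inv}(t,q) + t ∑_{k=1}^{n-1} [n choose k]_q q^k A_{n-k}^{des,inv}(t,q) A_k^{des,inv}(t,q). -/
open Finset

/-- A permutation of `Fin n` viewed as a function `ℕ → ℕ` (0-based), identity outside. -/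
def pf {n : ℕ} (π : Equiv.Perm (Fin n)) (i : ℕ) : ℕ :=
  if h : i < n then (π ⟨i, h⟩ : ℕ) else i

/-- Number of descents. -/
def desN {n : ℕ} (π : Equiv.Perm (Fin n)) : ℕ :=
  ((range (n - 1)).filter (fun i => pf π (i + 1) < pf π i)).card

/-- Number of inversions. -/
def invN {n : ℕ} (π : Equiv.Perm (Fin n)) : ℕ :=
  (((range n) ×ˢ (range n)).filter (fun p => p.1 < p.2 ∧ pf π p.2 < pf π p.1)).card

/-- Number of excedances. -/
def excN {n : ℕ} (π : Equiv.Perm (Fin n)) : ℕ :=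
  ((range n).filter (fun i => i < pf π i)).card

/-- Major index. -/
def majN {n : ℕ} (π : Equiv.Perm (Fin n)) : ℕ :=
  ∑ i ∈ (range (n - 1)).filter (fun i => pf π (i + 1) < pf π i), (i + 1)

/-- Number of admissible inversions. -/
def aiN {n : ℕ} (π : Equiv.Perm (Fin n)) : ℕ :=
  (((range n) ×ˢ (range n)).filter (fun p => p.1 < p.2 ∧ pf π p.2 < pf π p.1 ∧
    ((0 < p.1 ∧ pf π (p.1 - 1) < pf π p.1) ∨ ∃ k < p.2, p.1 < k ∧ pf π p.1 < pf π k))).card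

/-- The classical Eulerian polynomial `A_n(t) = ∑_{π ∈ S_n} t^{des π}`. -/
def eulerPoly (R : Type*) [CommRing R] (n : ℕ) (t : R) : R :=
  ∑ π : Equiv.Perm (Fin n), t ^ desN π

/-- The (maj, exc) q-Eulerian polynomial `A_n(t,q)`. -/
def Aq (R : Type*) [CommRing R] (n : ℕ) (t q : R) : R :=
  ∑ π : Equiv.Perm (Fin n), t ^ excN π * q ^ (majN π - excN π)

/-- The Gaussian binomial coefficient (as a value at `q`), via the q-Pascal recurrence. -/
def gaussR {R : Type*} [CommRing R] (q : R) : ℕ → ℕ → R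
  | _, 0 => 1
  | 0, _ + 1 => 0
  | n + 1, k + 1 => gaussR q n k + q ^ (k + 1) * gaussR q n (k + 1)

/-- The q-binomial-Eulerian polynomial `Ã_n(t,q)`. -/
def Atilde (R : Type*) [CommRing R] (n : ℕ) (t q : R) : R :=
  1 + t * ∑ m ∈ Icc 1 n, gaussR q n m * Aq R m t q

/-- Membership in PRW: if the permutation has an ascent, then the first ascent
carries the smallest letter. -/
def isPRW {n : ℕ} (π : Equiv.Perm (Fin n)) : Prop :=
  ∀ i < n, i + 1 < n → pf π i < pf π (i + 1) →
    (∀ j < i, ¬ pf π j < pf π (j + 1)) → pf π i = 0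

instance {n : ℕ} : DecidablePred (isPRW (n := n)) := fun _ => by
  unfold isPRW; infer_instance

/-- 1-based entries with boundary convention `σ₀ = σ_{n+1} = +∞` (encoded as `n`). -/
def extv {n : ℕ} (π : Equiv.Perm (Fin n)) (i : ℕ) : ℕ :=
  if 1 ≤ i ∧ i ≤ n then pf π (i - 1) else n

/-- Number of non-initial double descents. -/
def ddN {n : ℕ} (π : Equiv.Perm (Fin n)) : ℕ :=
  ((Icc 2 n).filter (fun i => extv π (i + 1) < extv π i ∧ extv π i < extv π (i - 1))).card




def desL : List ℕ → ℕ
  | a :: b :: l => (if b < a then 1 else 0) + desL (b :: l)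
  | _ => 0

def invL : List ℕ → ℕ
  | [] => 0
  | a :: l => l.countP (fun x => decide (x < a)) + invL l

def crossL (a b : List ℕ) : ℕ := (a.map (fun x => b.countP (fun y => decide (y < x)))).sum

@[simp] lemma desL_nil : desL [] = 0 := rfl
@[simp] lemma desL_single (a : ℕ) : desL [a] = 0 := rfl
lemma desL_cons2 (a b : ℕ) (l : List ℕ) :
    desL (a :: b :: l) = (if b < a then 1 else 0) + desL (b :: l) := rfl

@[simp] lemma invL_nil : invL [] = 0 := rfl
lemma invL_cons (a : ℕ) (l : List ℕ) :
    invL (a :: l) = l.countP (fun x => decide (x < a)) + invL l := rfl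

@[simp] lemma crossL_nil_left (b : List ℕ) : crossL [] b = 0 := rfl
lemma crossL_cons_left (x : ℕ) (a b : List ℕ) :
    crossL (x :: a) b = b.countP (fun y => decide (y < x)) + crossL a b := by
  simp [crossL]

lemma invL_append (a b : List ℕ) : invL (a ++ b) = invL a + invL b + crossL a b := by
  induction a with
  | nil => simp
  | cons x a ih =>
      simp only [List.cons_append, invL_cons, List.countP_append, ih, crossL_cons_left]
      ring

lemma desL_append_cons (x : ℕ) (a b : List ℕ) (h : ∀ y ∈ a, y < x) :
    desL (a ++ x :: b) = desL a + desL (x :: b) := by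
  induction a with
  | nil => simp
  | cons y a ih =>
      cases a with
      | nil =>
          have : ¬ x < y := Nat.not_lt.2 (le_of_lt (h y (by simp)))
          simp [desL_cons2, this]
      | cons z a =>
          have ih' := ih (fun u hu => h u (by simp [hu]))
          simp only [List.cons_append] at ih' ⊢
          rw [desL_cons2, ih', desL_cons2]
          ring

lemma crossL_cons_right_of_lt (n : ℕ) (a b : List ℕ) (h : ∀ x ∈ a, x < n) :
    crossL a (n :: b) = crossL a b := by
  induction a with
  | nil => simp
  | cons x a ih =>
      rw [crossL_cons_left, crossL_cons_left, ih (fun u hu => h u (by simp [hu]))]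
      congr 1
      rw [List.countP_cons]
      simp [Nat.not_lt.2 (le_of_lt (h x (by simp)))]

lemma countP_lt_eq_length (n : ℕ) (b : List ℕ) (h : ∀ x ∈ b, x < n) :
    b.countP (fun x => decide (x < n)) = b.length := by
  rw [List.countP_eq_length]
  intro x hx; simpa using h x hx

lemma crossL_perm {a a' b b' : List ℕ} (ha : a.Perm a') (hb : b.Perm b') :
    crossL a b = crossL a' b' := by
  unfold crossL
  rw [List.Perm.sum_eq (ha.map _)]
  congr 1
  apply List.map_congr_left
  intro x _
  exact hb.countP_eq _


lemma desL_map (f : ℕ → ℕ) : ∀ l : List ℕ, (∀ x ∈ l, ∀ y ∈ l, (f x < f y ↔ x < y)) →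
    desL (l.map f) = desL l
  | [] => fun _ => rfl
  | [a] => fun _ => rfl
  | a :: b :: l => fun h => by
      have hsub : ∀ x ∈ b :: l, ∀ y ∈ b :: l, (f x < f y ↔ x < y) := by
        intro x hx y hy
        exact h x (by simp [List.mem_cons] at hx ⊢; tauto) y
          (by simp [List.mem_cons] at hy ⊢; tauto)
      have := desL_map f (b :: l) hsub
      simp only [List.map_cons] at this ⊢
      rw [desL_cons2, desL_cons2, this,
        if_congr (h b (by simp) a (by simp)) rfl rfl]

lemma invL_map (f : ℕ → ℕ) : ∀ l : List ℕ, (∀ x ∈ l, ∀ y ∈ l, (f x < f y ↔ x < y)) →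
    invL (l.map f) = invL l
  | [] => fun _ => rfl
  | a :: l => fun h => by
      have hsub : ∀ x ∈ l, ∀ y ∈ l, (f x < f y ↔ x < y) := fun x hx y hy =>
        h x (by simp [hx]) y (by simp [hy])
      simp only [List.map_cons, invL_cons]
      rw [invL_map f l hsub, List.countP_map]
      congr 1
      apply List.countP_congr
      intro x hx
      simp only [Function.comp_apply, decide_eq_true_eq]
      exact h x (by simp [hx]) a (by simp)

lemma countP_lt_eq_sum_range (a : ℕ) : ∀ l : List ℕ,
    l.countP (fun x => decide (x < a)) =
      ∑ j ∈ range l.length, (if l.getD j 0 < a then 1 else 0)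
  | [] => by simp
  | x :: l => by
      rw [List.countP_cons, List.length_cons, Finset.sum_range_succ']
      simp only [List.getD_cons_succ, List.getD_cons_zero]
      rw [countP_lt_eq_sum_range a l]
      by_cases h : x < a <;> simp [h]

lemma desL_eq_card : ∀ l : List ℕ,
    desL l = ((range (l.length - 1)).filter
      (fun i => l.getD (i + 1) 0 < l.getD i 0)).card
  | [] => by simp [desL]
  | [a] => by simp [desL]
  | a :: b :: l => by
      rw [desL_cons2, desL_eq_card (b :: l)]
      rw [Finset.card_filter, Finset.card_filter]
      simp only [List.length_cons, Nat.add_sub_cancel]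
      rw [Finset.sum_range_succ']
      simp only [List.getD_cons_succ, List.getD_cons_zero]
      omega

lemma invL_eq_card : ∀ l : List ℕ,
    invL l = (((range l.length) ×ˢ (range l.length)).filter
      (fun p => p.1 < p.2 ∧ l.getD p.2 0 < l.getD p.1 0)).card
  | [] => by simp [invL]
  | a :: l => by
      rw [invL_cons, invL_eq_card l, Finset.card_filter, Finset.card_filter,
        Finset.sum_product, Finset.sum_product]
      simp only [List.length_cons]
      rw [Finset.sum_range_succ']
      have h0 : ∑ j ∈ range (l.length + 1),
          (if 0 < j ∧ (a :: l).getD j 0 < (a :: l).getD 0 0 then 1 else 0) =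
          l.countP (fun x => decide (x < a)) := by
        rw [Finset.sum_range_succ']
        simp only [List.getD_cons_succ, List.getD_cons_zero, Nat.lt_irrefl, false_and,
          if_false, add_zero, Nat.succ_pos, true_and]
        rw [countP_lt_eq_sum_range]
      rw [h0]
      have h1 : ∀ i, ∑ j ∈ range (l.length + 1),
          (if i + 1 < j ∧ (a :: l).getD j 0 < (a :: l).getD (i + 1) 0 then 1 else 0) =
          ∑ j ∈ range l.length, (if i < j ∧ l.getD j 0 < l.getD i 0 then 1 else 0) := by
        intro i
        rw [Finset.sum_range_succ']
        simp only [List.getD_cons_succ, Nat.add_lt_add_iff_right]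
        simp
      simp only [h1]
      omega


def wordsOf (A : Finset ℕ) : Finset (List ℕ) := (A.sort (· ≤ ·)).permutations.toFinset

lemma mem_wordsOf {A : Finset ℕ} {l : List ℕ} :
    l ∈ wordsOf A ↔ l.Perm (A.sort (· ≤ ·)) := by
  rw [wordsOf, List.mem_toFinset, List.mem_permutations]

def wordOf {m : ℕ} (π : Equiv.Perm (Fin m)) : List ℕ := List.ofFn (fun i => (π i : ℕ))

lemma length_wordOf {m : ℕ} (π : Equiv.Perm (Fin m)) : (wordOf π).length = m := by
  simp [wordOf]

lemma getD_wordOf {m : ℕ} (π : Equiv.Perm (Fin m)) {i : ℕ} (h : i < m) :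
    (wordOf π).getD i 0 = pf π i := by
  rw [List.getD_eq_getElem _ _ (by simpa [length_wordOf] using h)]
  simp [wordOf, pf, h]

lemma desN_eq {m : ℕ} (π : Equiv.Perm (Fin m)) : desN π = desL (wordOf π) := by
  rw [desL_eq_card, length_wordOf, desN]
  apply congrArg
  apply Finset.filter_congr
  intro i hi
  rw [Finset.mem_range] at hi
  have h1 : i + 1 < m := by omega
  rw [getD_wordOf π h1, getD_wordOf π (by omega)]

lemma invN_eq {m : ℕ} (π : Equiv.Perm (Fin m)) : invN π = invL (wordOf π) := by
  rw [invL_eq_card, length_wordOf, invN]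
  apply congrArg
  apply Finset.filter_congr
  intro p hp
  rw [Finset.mem_product, Finset.mem_range, Finset.mem_range] at hp
  rw [getD_wordOf π hp.1, getD_wordOf π hp.2]

lemma wordOf_perm_range {m : ℕ} (π : Equiv.Perm (Fin m)) :
    (wordOf π).Perm (List.range m) := by
  have h1 : wordOf π = ((List.finRange m).map π).map Fin.val := by
    simp [wordOf, List.ofFn_eq_map, List.map_map]
  have h2 : ((List.finRange m).map π).Perm (List.finRange m) := by
    apply List.perm_of_nodup_nodup_toFinset_eq
    · exact (List.nodup_finRange m).map π.injective
    · exact List.nodup_finRange m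
    · ext i
      simp only [List.mem_toFinset, List.mem_map, List.mem_finRange, true_and]
      exact ⟨fun _ => trivial, fun _ => ⟨π.symm i, by simp⟩⟩
  rw [h1, show List.range m = (List.finRange m).map Fin.val from
    List.ext_getElem (by simp) (fun i _ _ => by simp)]
  exact h2.map Fin.val

lemma perm_sum_eq_word_sum {R : Type*} [CommRing R] (t q : R) (m : ℕ) :
    ∑ π : Equiv.Perm (Fin m), t ^ desN π * q ^ invN π =
      ∑ l ∈ wordsOf (range m), t ^ desL l * q ^ invL l := by
  apply Finset.sum_bij (fun π _ => wordOf π)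
  · intro π _
    rw [mem_wordsOf, Finset.sort_range]
    exact wordOf_perm_range π
  · intro π _ π' _ h
    have h2 : (fun i => (π i : ℕ)) = (fun i => (π' i : ℕ)) := List.ofFn_inj.mp h
    ext i
    exact congrFun h2 i
  · intro l hl
    rw [mem_wordsOf, Finset.sort_range] at hl
    have hlen : l.length = m := by simpa using hl.length_eq
    have hnodup : l.Nodup := hl.nodup_iff.mpr (List.nodup_range (n := m))
    have hmem : ∀ i (h : i < m), l[i]'(by omega) < m := by
      intro i h
      have : l[i]'(by omega) ∈ l := List.getElem_mem _
      have := hl.mem_iff.mp this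
      simpa using this
    set f : Fin m → Fin m := fun i => ⟨l[(i : ℕ)]'(by omega), hmem i i.2⟩ with hf
    have hinj : Function.Injective f := by
      intro i j hij
      have : l[(i : ℕ)]'(by omega) = l[(j : ℕ)]'(by omega) := by
        simpa [hf] using congrArg Fin.val hij
      have := (List.Nodup.getElem_inj_iff hnodup).mp this
      exact Fin.ext this
    have hbij : Function.Bijective f := Finite.injective_iff_bijective.mp hinj
    refine ⟨Equiv.ofBijective f hbij, Finset.mem_univ _, ?_⟩
    apply List.ext_getElem (by simp [length_wordOf, hlen])
    intro i h1 h2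
    simp only [wordOf, List.getElem_ofFn]
    rfl
  · intro π _
    rw [desN_eq, invN_eq]


noncomputable def std (A : Finset ℕ) (i : ℕ) : ℕ :=
  if h : i < A.card then (A.orderEmbOfFin rfl ⟨i, h⟩ : ℕ) else 0

noncomputable def unstd (A : Finset ℕ) (x : ℕ) : ℕ := (A.sort (· ≤ ·)).idxOf x

lemma std_eq_sort (A : Finset ℕ) {i : ℕ} (h : i < A.card) :
    std A i = (A.sort (· ≤ ·))[i]'(by rwa [Finset.length_sort]) := by
  rw [std, dif_pos h]
  exact Finset.orderEmbOfFin_apply A rfl ⟨i, h⟩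

lemma std_mem (A : Finset ℕ) {i : ℕ} (h : i < A.card) : std A i ∈ A := by
  rw [std, dif_pos h]; exact Finset.orderEmbOfFin_mem A rfl _

lemma std_lt_iff (A : Finset ℕ) {i j : ℕ} (hi : i < A.card) (hj : j < A.card) :
    std A i < std A j ↔ i < j := by
  rw [std, dif_pos hi, std, dif_pos hj]
  exact_mod_cast (A.orderEmbOfFin rfl).lt_iff_lt (a := ⟨i, hi⟩) (b := ⟨j, hj⟩)

lemma map_std_range (A : Finset ℕ) :
    (List.range A.card).map (std A) = A.sort (· ≤ ·) := by
  apply List.ext_getElem (by simp)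
  intro i h1 h2
  simp only [List.getElem_map, List.getElem_range]
  exact std_eq_sort A (by simpa using h1)

lemma unstd_std (A : Finset ℕ) {i : ℕ} (h : i < A.card) : unstd A (std A i) = i := by
  rw [std_eq_sort A h, unstd]
  exact List.Nodup.idxOf_getElem (A.sort_nodup _) i _

lemma unstd_lt (A : Finset ℕ) {x : ℕ} (hx : x ∈ A) : unstd A x < A.card := by
  rw [unstd, ← Finset.length_sort (α := ℕ) (· ≤ ·) (s := A)]
  exact List.idxOf_lt_length_iff.2 ((Finset.mem_sort _).2 hx)

lemma std_unstd (A : Finset ℕ) {x : ℕ} (hx : x ∈ A) : std A (unstd A x) = x := by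
  rw [std_eq_sort A (unstd_lt A hx)]
  simp only [unstd]
  exact List.getElem_idxOf (by rw [Finset.length_sort]; exact unstd_lt A hx)

lemma unstd_lt_iff (A : Finset ℕ) {x y : ℕ} (hx : x ∈ A) (hy : y ∈ A) :
    unstd A x < unstd A y ↔ x < y := by
  rw [← std_lt_iff A (unstd_lt A hx) (unstd_lt A hy), std_unstd A hx, std_unstd A hy]

lemma mem_of_mem_wordsOf {A : Finset ℕ} {w : List ℕ} (hw : w ∈ wordsOf A) :
    ∀ x ∈ w, x ∈ A := by
  intro x hx
  rw [mem_wordsOf] at hw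
  exact (Finset.mem_sort _).1 (hw.mem_iff.1 hx)

lemma word_sum_std {R : Type*} [CommRing R] (t q : R) (A : Finset ℕ) :
    ∑ l ∈ wordsOf A, t ^ desL l * q ^ invL l =
      ∑ l ∈ wordsOf (range A.card), t ^ desL l * q ^ invL l := by
  apply Finset.sum_bij (fun w _ => w.map (unstd A))
  · intro w hw
    rw [mem_wordsOf, Finset.sort_range]
    have h1 : (A.sort (· ≤ ·)).map (unstd A) = List.range A.card := by
      conv_lhs => rw [← map_std_range A]
      rw [List.map_map]
      have : ∀ i ∈ List.range A.card, (unstd A ∘ std A) i = id i := by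
        intro i hi
        simp only [Function.comp_apply, id]
        exact unstd_std A (by simpa using hi)
      rw [List.map_congr_left this, List.map_id]
    rw [← h1]
    exact ((mem_wordsOf.1 hw).map _)
  · intro w hw w' hw' h
    have key : ∀ u, u ∈ wordsOf A → (u.map (unstd A)).map (std A) = u := by
      intro u hu
      rw [List.map_map]
      have : ∀ x ∈ u, (std A ∘ unstd A) x = id x := by
        intro x hx
        simp only [Function.comp_apply, id]
        exact std_unstd A (mem_of_mem_wordsOf hu x hx)
      rw [List.map_congr_left this, List.map_id]
    rw [← key w hw, ← key w' hw', h]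
  · intro l hl
    refine ⟨l.map (std A), ?_, ?_⟩
    · rw [mem_wordsOf, ← map_std_range A]
      apply List.Perm.map
      have := mem_wordsOf.1 hl
      rwa [Finset.sort_range] at this
    · rw [List.map_map]
      have hl' : l.Perm (List.range A.card) := by
        have := mem_wordsOf.1 hl
        rwa [Finset.sort_range] at this
      have : ∀ x ∈ l, (unstd A ∘ std A) x = id x := by
        intro x hx
        simp only [Function.comp_apply, id]
        exact unstd_std A (by simpa using hl'.mem_iff.1 hx)
      rw [List.map_congr_left this, List.map_id]
  · intro w hw
    have hmono : ∀ x ∈ w, ∀ y ∈ w, (unstd A x < unstd A y ↔ x < y) := by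
      intro x hx y hy
      exact unstd_lt_iff A (mem_of_mem_wordsOf hw x hx) (mem_of_mem_wordsOf hw y hy)
    rw [desL_map _ _ hmono, invL_map _ _ hmono]


def crossF (A B : Finset ℕ) : ℕ := ∑ x ∈ A, (B.filter (· < x)).card

@[simp] lemma gaussR_zero_right {R : Type*} [CommRing R] (q : R) (n : ℕ) :
    gaussR q n 0 = 1 := by cases n <;> rfl

@[simp] lemma crossF_empty_right (A : Finset ℕ) : crossF A ∅ = 0 := by
  simp [crossF]

lemma crossF_insert_left {A B : Finset ℕ} {n : ℕ} (hn : n ∉ A) :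
    crossF (insert n A) B = (B.filter (· < n)).card + crossF A B :=
  Finset.sum_insert hn

lemma crossF_insert_right {A B : Finset ℕ} {n : ℕ} (h : ∀ x ∈ A, x < n) :
    crossF A (insert n B) = crossF A B := by
  apply Finset.sum_congr rfl
  intro x hx
  have := h x hx
  rw [Finset.filter_insert, if_neg (by omega)]

lemma gauss_sum {R : Type*} [CommRing R] (q : R) :
    ∀ n k, ∑ B ∈ powersetCard k (range n), q ^ crossF ((range n) \ B) B = gaussR q n k := by
  intro n
  induction n with
  | zero =>
      intro k
      cases k with
      | zero => simp [crossF]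
      | succ k =>
          rw [Finset.powersetCard_eq_empty.2 (by simp)]
          simp [gaussR]
  | succ n ih =>
      intro k
      cases k with
      | zero => simp [crossF]
      | succ k =>
          rw [Finset.range_add_one, Finset.powersetCard_succ_insert (by simp)]
          rw [Finset.sum_union]
          · have h1 : ∀ B ∈ powersetCard (k+1) (range n),
                crossF (insert n (range n) \ B) B = crossF ((range n) \ B) B + (k+1) := by
              intro B hB
              rw [Finset.mem_powersetCard] at hB
              have hnB : n ∉ B := fun h => by
                have := hB.1 h; simp at this
              have hset : insert n (range n) \ B = insert n ((range n) \ B) := by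
                ext x
                simp only [Finset.mem_sdiff, Finset.mem_insert, Finset.mem_range]
                constructor
                · rintro ⟨h1 | h1, h2⟩
                  · exact Or.inl h1
                  · exact Or.inr ⟨h1, h2⟩
                · rintro (h1 | ⟨h1, h2⟩)
                  · exact ⟨Or.inl h1, h1 ▸ hnB⟩
                  · exact ⟨Or.inr h1, h2⟩
              rw [hset, crossF_insert_left (by simp)]
              have : B.filter (· < n) = B := by
                apply Finset.filter_true_of_mem
                intro x hx
                have := hB.1 hx; simpa using this
              rw [this, hB.2]
              ring
            have h2 : ∑ B ∈ powersetCard (k+1) (range n),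
                q ^ crossF (insert n (range n) \ B) B = q ^ (k+1) * gaussR q n (k+1) := by
              rw [← ih (k+1), Finset.mul_sum]
              apply Finset.sum_congr rfl
              intro B hB
              rw [h1 B hB, pow_add, mul_comm]
            have h3 : ∑ B ∈ (powersetCard k (range n)).image (insert n),
                q ^ crossF (insert n (range n) \ B) B = gaussR q n k := by
              rw [Finset.sum_image]
              · rw [← ih k]
                apply Finset.sum_congr rfl
                intro B hB
                rw [Finset.mem_powersetCard] at hB
                have hnB : n ∉ B := fun h => by have := hB.1 h; simp at this
                have hset : insert n (range n) \ insert n B = (range n) \ B := by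
                  ext x
                  simp only [Finset.mem_sdiff, Finset.mem_insert, Finset.mem_range]
                  constructor
                  · rintro ⟨h1 | h1, h2⟩
                    · exact absurd (Or.inl h1.symm) (by tauto)
                    · exact ⟨h1, fun hx2 => h2 (Or.inr hx2)⟩
                  · rintro ⟨h1, h2⟩
                    refine ⟨Or.inr h1, ?_⟩
                    rintro (rfl | hx)
                    · omega
                    · exact h2 hx
                rw [hset, crossF_insert_right]
                intro x hx
                rw [Finset.mem_sdiff, Finset.mem_range] at hx
                exact hx.1
              · intro B hB B' hB' h
                rw [Finset.mem_coe, Finset.mem_powersetCard] at hB hB'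
                have hnB : n ∉ B := fun hh => by have := hB.1 hh; simp at this
                have hnB' : n ∉ B' := fun hh => by have := hB'.1 hh; simp at this
                have := congrArg (Finset.erase · n) h
                simpa [Finset.erase_insert, hnB, hnB'] using this
            rw [h2, h3]
            show _ = gaussR q n k + q ^ (k + 1) * gaussR q n (k + 1)
            ring
          · rw [Finset.disjoint_left]
            intro B hB hB'
            rw [Finset.mem_powersetCard] at hB
            rw [Finset.mem_image] at hB'
            obtain ⟨B', hB', rfl⟩ := hB'
            have : n ∈ insert n B' := Finset.mem_insert_self n B'
            have := hB.1 this
            simp at this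



lemma sum_sort_map {M : Type*} [AddCommMonoid M] (A : Finset ℕ) (f : ℕ → M) :
    ((A.sort (· ≤ ·)).map f).sum = ∑ x ∈ A, f x := by
  rw [← Multiset.sum_coe, ← Multiset.map_coe, Finset.sort_eq]
  rfl

lemma countP_sort (B : Finset ℕ) (p : ℕ → Prop) [DecidablePred p] :
    (B.sort (· ≤ ·)).countP (fun y => decide (p y)) = (B.filter p).card := by
  rw [Finset.card_filter, ← sum_sort_map]
  induction B.sort (· ≤ ·) with
  | nil => simp
  | cons x l ih =>
      rw [List.countP_cons, List.map_cons, List.sum_cons, ih]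
      by_cases h : p x <;> simp [h] <;> omega

lemma crossL_sort_sort (A B : Finset ℕ) :
    crossL (A.sort (· ≤ ·)) (B.sort (· ≤ ·)) = crossF A B := by
  rw [crossL, crossF, sum_sort_map]
  apply Finset.sum_congr rfl
  intro x _
  exact countP_sort B (· < x)

lemma append_cons_inj {x : ℕ} : ∀ {a a' b b' : List ℕ}, x ∉ a → x ∉ a' →
    a ++ x :: b = a' ++ x :: b' → a = a' ∧ b = b'
  | [], [], b, b', _, _, h => by simpa using h
  | [], y :: a', b, b', _, ha', h => by
      simp only [List.nil_append, List.cons_append, List.cons.injEq] at h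
      exact absurd (h.1 ▸ List.mem_cons_self (a := y) (l := a')) (by simpa [h.1] using ha')
  | y :: a, [], b, b', ha, _, h => by
      simp only [List.cons_append, List.nil_append, List.cons.injEq] at h
      exact absurd (h.1 ▸ List.mem_cons_self (a := y) (l := a)) (by simpa [h.1] using ha)
  | y :: a, y' :: a', b, b', ha, ha', h => by
      simp only [List.cons_append, List.cons.injEq] at h
      obtain ⟨rfl, h2⟩ := h
      have := append_cons_inj (fun hx => ha (List.mem_cons_of_mem _ hx))
        (fun hx => ha' (List.mem_cons_of_mem _ hx)) h2
      exact ⟨by rw [this.1], this.2⟩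

lemma gaussR_eq_zero {R : Type*} [CommRing R] (q : R) : ∀ n k, n < k → gaussR q n k = 0 := by
  intro n
  induction n with
  | zero => intro k hk; cases k with
      | zero => omega
      | succ k => rfl
  | succ n ih =>
      intro k hk
      cases k with
      | zero => omega
      | succ k =>
          show gaussR q n k + q ^ (k+1) * gaussR q n (k+1) = 0
          rw [ih k (by omega), ih (k+1) (by omega)]
          ring

lemma gaussR_diag {R : Type*} [CommRing R] (q : R) : ∀ n, gaussR q n n = 1 := by
  intro n
  induction n with
  | zero => rfl
  | succ n ih =>
      show gaussR q n n + q ^ (n+1) * gaussR q n (n+1) = 1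
      rw [ih, gaussR_eq_zero q n (n+1) (by omega)]
      ring


lemma entries_lt_of_wordsOf {n : ℕ} {B : Finset ℕ} (hB : B ⊆ range n) :
    (∀ b ∈ wordsOf B, ∀ x ∈ b, x < n) ∧ (∀ a ∈ wordsOf ((range n) \ B), ∀ x ∈ a, x < n) := by
  constructor
  · intro b hb x hx
    have := mem_of_mem_wordsOf hb x hx
    simpa using hB this
  · intro a ha x hx
    have := mem_of_mem_wordsOf ha x hx
    rw [Finset.mem_sdiff, Finset.mem_range] at this
    exact this.1

lemma word_split {R : Type*} [CommRing R] (n : ℕ) (F : List ℕ → R) :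
    ∑ l ∈ wordsOf (range (n + 1)), F l =
    ∑ p ∈ (range n).powerset.sigma
        (fun B => (wordsOf ((range n) \ B)) ×ˢ (wordsOf B)),
      F (p.2.1 ++ n :: p.2.2) := by
  symm
  apply Finset.sum_bij (fun p _ => p.2.1 ++ n :: p.2.2)
  · rintro ⟨B, a, b⟩ hp
    rw [Finset.mem_sigma, Finset.mem_powerset, Finset.mem_product] at hp
    obtain ⟨hB, ha, hb⟩ := hp
    rw [mem_wordsOf, Finset.sort_range, ← Multiset.coe_eq_coe]
    have hca : (↑a : Multiset ℕ) = ((range n) \ B).val := by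
      rw [← Finset.sort_eq _ (· ≤ ·)]
      exact Multiset.coe_eq_coe.2 (mem_wordsOf.1 ha)
    have hcb : (↑b : Multiset ℕ) = B.val := by
      rw [← Finset.sort_eq _ (· ≤ ·)]
      exact Multiset.coe_eq_coe.2 (mem_wordsOf.1 hb)
    have hrange : (↑(List.range (n + 1)) : Multiset ℕ) = (range (n + 1)).val := by
      rw [← Finset.sort_range, Finset.sort_eq]
    show (↑(a ++ n :: b) : Multiset ℕ) = ↑(List.range (n + 1))
    rw [hrange]
    have : (↑(a ++ n :: b) : Multiset ℕ) = ↑a + (n ::ₘ ↑b) := by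
      simp
    rw [this, hca, hcb, Finset.sdiff_val]
    have hval : (range (n + 1)).val = n ::ₘ (range n).val := by
      rw [Finset.range_add_one, Finset.insert_val_of_notMem (by simp)]
    rw [hval]
    have hle : B.val ≤ (range n).val := Finset.val_le_iff.2 hB
    have : (range n).val - B.val + (n ::ₘ B.val) = n ::ₘ ((range n).val - B.val + B.val) := by
      rw [Multiset.add_cons]
    rw [this, tsub_add_cancel_of_le hle]
  · rintro ⟨B, a, b⟩ hp ⟨B', a', b'⟩ hp' h
    rw [Finset.mem_sigma, Finset.mem_powerset, Finset.mem_product] at hp hp'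
    obtain ⟨hB, ha, hb⟩ := hp
    obtain ⟨hB', ha', hb'⟩ := hp'
    have hna : n ∉ a := fun hx => by
      have := (entries_lt_of_wordsOf hB).2 a ha n hx; omega
    have hna' : n ∉ a' := fun hx => by
      have := (entries_lt_of_wordsOf hB').2 a' ha' n hx; omega
    obtain ⟨rfl, rfl⟩ := append_cons_inj hna hna' h
    have : B = B' := by
      rw [← Finset.sort_toFinset B (· ≤ ·), ← Finset.sort_toFinset B' (· ≤ ·)]
      rw [← List.toFinset_eq_of_perm _ _ (mem_wordsOf.1 hb),
        ← List.toFinset_eq_of_perm _ _ (mem_wordsOf.1 hb')]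
    subst this
    rfl
  · intro l hl
    have hl' := mem_wordsOf.1 hl
    rw [Finset.sort_range] at hl'
    have hnodup : l.Nodup := hl'.nodup_iff.mpr (List.nodup_range)
    have hn : n ∈ l := hl'.mem_iff.2 (by simp [List.mem_range])
    obtain ⟨a, b, rfl⟩ := List.append_of_mem hn
    rw [List.nodup_append] at hnodup
    obtain ⟨hand, hnbnd, hdisj⟩ := hnodup
    have hnb : n ∉ b := by
      have := hnbnd; rw [List.nodup_cons] at this; exact this.1
    have hbnd : b.Nodup := by
      have := hnbnd; rw [List.nodup_cons] at this; exact this.2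
    have hmeml : ∀ x, x ∈ a ++ n :: b ↔ x < n + 1 := by
      intro x
      rw [hl'.mem_iff, List.mem_range]
    refine ⟨⟨b.toFinset, a, b⟩, ?_, rfl⟩
    rw [Finset.mem_sigma, Finset.mem_powerset, Finset.mem_product]
    have hbsub : b.toFinset ⊆ range n := by
      intro x hx
      rw [List.mem_toFinset] at hx
      have hxl : x ∈ a ++ n :: b := by simp [hx]
      have := (hmeml x).1 hxl
      have hxn : x ≠ n := fun hh => hnb (hh ▸ hx)
      rw [Finset.mem_range]; omega
    refine ⟨hbsub, ?_, ?_⟩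
    · rw [mem_wordsOf]
      apply List.perm_of_nodup_nodup_toFinset_eq hand (Finset.sort_nodup _ _)
      rw [Finset.sort_toFinset]
      ext x
      rw [List.mem_toFinset, Finset.mem_sdiff, Finset.mem_range, List.mem_toFinset]
      constructor
      · intro hx
        have hxl : x ∈ a ++ n :: b := by simp [hx]
        have h1 := (hmeml x).1 hxl
        have h2 : x ∉ n :: b := fun hm => hdisj x hx x hm rfl
        have hxn : x ≠ n := fun hh => h2 (hh ▸ List.mem_cons_self)
        exact ⟨by omega, fun hxb => h2 (List.mem_cons_of_mem _ hxb)⟩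
      · rintro ⟨h1, h2⟩
        have hxl : x ∈ a ++ n :: b := (hmeml x).2 (by omega)
        rw [List.mem_append, List.mem_cons] at hxl
        rcases hxl with h | h | h
        · exact h
        · omega
        · exact absurd h h2
    · rw [mem_wordsOf]
      apply List.perm_of_nodup_nodup_toFinset_eq hbnd (Finset.sort_nodup _ _)
      rw [Finset.sort_toFinset]
  · intro p hp
    rfl



lemma b_length {B : Finset ℕ} {b : List ℕ} (hb : b ∈ wordsOf B) : b.length = B.card :=
  (mem_wordsOf.1 hb).length_eq.trans (Finset.length_sort _)

lemma value_split {R : Type*} [CommRing R] (t q : R) {n : ℕ} {B : Finset ℕ} (hB : B ⊆ range n)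
    {a b : List ℕ} (ha : a ∈ wordsOf ((range n) \ B)) (hb : b ∈ wordsOf B) :
    t ^ desL (a ++ n :: b) * q ^ invL (a ++ n :: b) =
      (if B = ∅ then 1 else t) * q ^ (B.card + crossF ((range n) \ B) B) *
        ((t ^ desL a * q ^ invL a) * (t ^ desL b * q ^ invL b)) := by
  have hlta : ∀ y ∈ a, y < n := (entries_lt_of_wordsOf hB).2 a ha
  have hltb : ∀ y ∈ b, y < n := (entries_lt_of_wordsOf hB).1 b hb
  have hdes : desL (a ++ n :: b) = desL a + desL (n :: b) := desL_append_cons n a b hlta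
  have hinv : invL (a ++ n :: b) = invL a + invL (n :: b) + crossL a b := by
    rw [invL_append, crossL_cons_right_of_lt n a b hlta]
  have hinv2 : invL (n :: b) = B.card + invL b := by
    rw [invL_cons, countP_lt_eq_length n b hltb, b_length hb]
  have hcross : crossL a b = crossF ((range n) \ B) B := by
    rw [crossL_perm (mem_wordsOf.1 ha) (mem_wordsOf.1 hb), crossL_sort_sort]
  by_cases hBe : B = ∅
  · subst hBe
    have hbnil : b = [] := by
      have := b_length hb
      simpa [List.length_eq_zero_iff] using this
    subst hbnil
    simp only [hdes, hinv, hinv2, hcross, desL_single, invL_nil, crossF_empty_right,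
      Finset.card_empty, if_pos rfl, pow_add, add_zero, pow_zero]
    simp only [desL_nil, pow_zero, if_true, mul_one, one_mul]
  · have hbne : b ≠ [] := by
      intro hh
      subst hh
      have := b_length hb
      simp only [List.length_nil] at this
      exact hBe (Finset.card_eq_zero.1 this.symm)
    obtain ⟨y, b', rfl⟩ := List.exists_cons_of_ne_nil hbne
    have hdes2 : desL (n :: y :: b') = 1 + desL (y :: b') := by
      rw [desL_cons2, if_pos (hltb y (by simp))]
    rw [hdes, hdes2, hinv, hinv2, hcross, if_neg hBe]
    simp only [pow_add, pow_one]
    ring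

lemma sum_mul_split {R : Type*} [CommRing R] (s t' : Finset (List ℕ)) (c : R)
    (f g : List ℕ → R) :
    ∑ a ∈ s, ∑ b ∈ t', c * (f a * g b) = c * ((∑ a ∈ s, f a) * (∑ b ∈ t', g b)) := by
  rw [Finset.sum_mul_sum, Finset.mul_sum]
  apply Finset.sum_congr rfl
  intro a _
  rw [Finset.mul_sum]

lemma inner_sum_eq {R : Type*} [CommRing R] (t q : R) {n : ℕ} {B : Finset ℕ}
    (hB : B ⊆ range n) :
    ∑ p ∈ (wordsOf ((range n) \ B)) ×ˢ (wordsOf B),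
      t ^ desL (p.1 ++ n :: p.2) * q ^ invL (p.1 ++ n :: p.2) =
    (if B = ∅ then 1 else t) * q ^ (B.card + crossF ((range n) \ B) B) *
      ((∑ l ∈ wordsOf (range (n - B.card)), t ^ desL l * q ^ invL l) *
       (∑ l ∈ wordsOf (range B.card), t ^ desL l * q ^ invL l)) := by
  rw [Finset.sum_product]
  rw [Finset.sum_congr rfl (fun a ha => Finset.sum_congr rfl
    (fun b hb => value_split t q hB ha hb))]
  rw [sum_mul_split]
  congr 2
  · rw [word_sum_std]
    congr 2
    rw [Finset.card_sdiff_of_subset hB, Finset.card_range]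
  · rw [word_sum_std]



def Wsum {R : Type*} [CommRing R] (t q : R) (m : ℕ) : R :=
  ∑ l ∈ wordsOf (range m), t ^ desL l * q ^ invL l

lemma perm_sum_eq_Wsum {R : Type*} [CommRing R] (t q : R) (m : ℕ) :
    ∑ π : Equiv.Perm (Fin m), t ^ desN π * q ^ invN π = Wsum t q m :=
  perm_sum_eq_word_sum t q m

lemma Wsum_zero {R : Type*} [CommRing R] (t q : R) : Wsum t q 0 = 1 := by
  rw [Wsum, wordsOf]
  simp

lemma Wsum_succ {R : Type*} [CommRing R] (t q : R) (n : ℕ) :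
    Wsum t q (n + 1) = ∑ j ∈ range (n + 1),
      ((if j = 0 then 1 else t) * q ^ j * gaussR q n j * (Wsum t q (n - j) * Wsum t q j)) := by
  have step1 : Wsum t q (n + 1) = ∑ B ∈ (range n).powerset,
      ((if B = ∅ then 1 else t) * q ^ (B.card + crossF ((range n) \ B) B) *
        (Wsum t q (n - B.card) * Wsum t q B.card)) := by
    rw [Wsum, word_split n (fun l => t ^ desL l * q ^ invL l), Finset.sum_sigma]
    apply Finset.sum_congr rfl
    intro B hB
    exact inner_sum_eq t q (Finset.mem_powerset.1 hB)
  rw [step1, Finset.sum_powerset, Finset.card_range]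
  apply Finset.sum_congr rfl
  intro j hj
  have hterm : ∀ B ∈ powersetCard j (range n),
      (if B = ∅ then 1 else t) * q ^ (B.card + crossF ((range n) \ B) B) *
        (Wsum t q (n - B.card) * Wsum t q B.card) =
      ((if j = 0 then 1 else t) * q ^ j * (Wsum t q (n - j) * Wsum t q j)) *
        q ^ crossF ((range n) \ B) B := by
    intro B hB
    rw [Finset.mem_powersetCard] at hB
    have hcard := hB.2
    have hempty : (B = ∅) = (j = 0) := by
      rw [← hcard]
      simp only [eq_iff_iff]
      exact ⟨fun h => by simp [h], fun h => Finset.card_eq_zero.1 h⟩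
    rw [hcard]
    simp only [hempty, pow_add]
    ring
  rw [Finset.sum_congr rfl hterm, ← Finset.mul_sum, gauss_sum q n j]
  ring

/-- Chow's quadratic recursion for the (inv, des)-q-Eulerian polynomials. -/
theorem stmt5 {R : Type*} [CommRing R] (t q : R) (n : ℕ) (hn : 1 ≤ n) :
    ∑ π : Equiv.Perm (Fin (n + 1)), t ^ desN π * q ^ invN π =
      (1 + t * q ^ n) * ∑ π : Equiv.Perm (Fin n), t ^ desN π * q ^ invN π +
        t * ∑ k ∈ Icc 1 (n - 1), gaussR q n k * q ^ k *
          (∑ π : Equiv.Perm (Fin (n - k)), t ^ desN π * q ^ invN π) *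
          (∑ π : Equiv.Perm (Fin k), t ^ desN π * q ^ invN π) := by
  simp only [perm_sum_eq_Wsum]
  obtain ⟨m, rfl⟩ : ∃ m, n = m + 1 := ⟨n - 1, by omega⟩
  rw [Wsum_succ t q (m + 1)]
  have hIcc : (Icc 1 (m + 1 - 1) : Finset ℕ) = Ico 1 (m + 1) := by
    rw [Nat.add_sub_cancel, Finset.Ico_add_one_right_eq_Icc]
  rw [hIcc, Finset.sum_Ico_eq_sum_range]
  simp only [Nat.add_sub_cancel]
  rw [Finset.sum_range_succ, Finset.sum_range_succ']
  have hmid : ∑ i ∈ range m,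
      ((if i + 1 = 0 then 1 else t) * q ^ (i + 1) * gaussR q (m + 1) (i + 1) *
        (Wsum t q (m + 1 - (i + 1)) * Wsum t q (i + 1))) =
      ∑ i ∈ range m, (t * (gaussR q (m + 1) (1 + i) * q ^ (1 + i) *
        Wsum t q (m + 1 - (1 + i)) * Wsum t q (1 + i))) := by
    apply Finset.sum_congr rfl
    intro i _
    have h1 : 1 + i = i + 1 := by omega
    rw [h1, if_neg (Nat.succ_ne_zero i)]
    ring
  rw [hmid]
  conv_lhs => rw [← Finset.mul_sum]
  rw [gaussR_diag, gaussR_zero_right]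
  simp only [Nat.sub_self, Nat.sub_zero, Wsum_zero, if_pos, Nat.succ_ne_zero, if_false,
    reduceIte, pow_zero, mul_one, one_mul]
  ring
end

section
/- Define A*_m(t) = 1 + t ∑_{k=1}^m C(m,k) (1+t)^k A_k(t), where A_k(t) is the k-th Eulerian polynomial. Then its exponential generating function is ∑_{n≥0} A*_n(t) x^n/n! = (t-1) e^{t²x} / (t - e^{(t²-1)x}). -/
open Finset

/-- The type B binomial-Eulerian polynomial `A*_n(t) = 1 + t ∑_{k=1}^n C(n,k)(1+t)^k A_k(t)`. -/
def Astar (R : Type*) [CommRing R] (n : ℕ) (t : R) : R :=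
  1 + t * ∑ k ∈ Icc 1 n, (n.choose k : R) * (1 + t) ^ k * eulerPoly R k t

/-- the permutation of positions: p ↦ n, i ↦ i for i < p, i ↦ i-1 for i > p. -/
def rho {n : ℕ} (p : Fin (n+1)) : Equiv.Perm (Fin (n+1)) where
  toFun i := if (i:ℕ) = (p:ℕ) then ⟨n, n.lt_succ_self⟩
    else if (p:ℕ) < (i:ℕ) then ⟨(i:ℕ) - 1, by omega⟩ else i
  invFun j := if h1 : (j:ℕ) = n then p
    else if (p:ℕ) ≤ (j:ℕ) then ⟨(j:ℕ) + 1, by have := j.isLt; omega⟩ else j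
  left_inv i := by
    have hi := i.isLt; have hp := p.isLt
    apply Fin.ext
    simp only [apply_dite (Fin.val), apply_ite (Fin.val), Fin.val_mk]
    split_ifs <;> omega
  right_inv j := by
    have hj := j.isLt; have hp := p.isLt
    apply Fin.ext
    simp only [apply_dite (Fin.val), apply_ite (Fin.val), Fin.val_mk]
    split_ifs <;> omega

noncomputable def incl {n : ℕ} (σ : Equiv.Perm (Fin n)) : Equiv.Perm (Fin (n+1)) :=
  σ.viaEmbedding Fin.castSuccEmb

lemma incl_apply_lt {n : ℕ} (σ : Equiv.Perm (Fin n)) (j : Fin (n+1)) (h : (j:ℕ) < n) :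
    incl σ j = (σ ⟨j, h⟩).castSucc := by
  calc incl σ j = incl σ (Fin.castSuccEmb ⟨j, h⟩) := congrArg _ (Fin.ext rfl)
    _ = Fin.castSuccEmb (σ ⟨j, h⟩) := σ.viaEmbedding_apply _ _
    _ = (σ ⟨j, h⟩).castSucc := rfl

lemma incl_apply_ge {n : ℕ} (σ : Equiv.Perm (Fin n)) (j : Fin (n+1)) (h : ¬ (j:ℕ) < n) :
    incl σ j = j := by
  apply Equiv.Perm.viaEmbedding_apply_of_notMem
  rintro ⟨x, rfl⟩
  exact h x.isLt

noncomputable def ins {n : ℕ} (x : Equiv.Perm (Fin n) × Fin (n+1)) : Equiv.Perm (Fin (n+1)) :=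
  incl x.1 * rho x.2

lemma pf_lt {n : ℕ} (σ : Equiv.Perm (Fin n)) {i : ℕ} (h : i < n) : pf σ i < n := by
  rw [pf, dif_pos h]; exact (σ ⟨i, h⟩).isLt

lemma pf_ins {n : ℕ} (σ : Equiv.Perm (Fin n)) (p : Fin (n+1)) {i : ℕ} (hi : i < n + 1) :
    pf (ins (σ, p)) i = if i < (p:ℕ) then pf σ i else if i = (p:ℕ) then n
      else pf σ (i - 1) := by
  have hp := p.isLt
  rw [pf, dif_pos hi]
  show ((incl σ) ((rho p) ⟨i, hi⟩) : ℕ) = _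
  rw [show ((rho p) ⟨i, hi⟩) = if (i:ℕ) = (p:ℕ) then (⟨n, n.lt_succ_self⟩ : Fin (n+1))
    else if (p:ℕ) < i then ⟨i - 1, by omega⟩ else ⟨i, hi⟩ from rfl]
  rcases Nat.lt_trichotomy i (p:ℕ) with h | h | h
  · rw [if_neg (by omega), if_neg (by omega), if_pos h]
    have hin : i < n := by omega
    rw [incl_apply_lt σ _ (by simpa using hin), Fin.coe_castSucc, pf, dif_pos hin]
  · rw [if_pos h, if_neg (by omega), if_pos h]
    rw [incl_apply_ge σ _ (by simp)]
  · rw [if_neg (by omega), if_pos h, if_neg (by omega), if_neg (by omega)]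
    have hin : i - 1 < n := by omega
    rw [incl_apply_lt σ _ (by simpa using hin), Fin.coe_castSucc, pf, dif_pos hin]

lemma desN_eq_sum {n : ℕ} (π : Equiv.Perm (Fin n)) :
    desN π = ∑ j ∈ range (n-1), (if pf π (j+1) < pf π j then 1 else 0) := by
  rw [desN, Finset.card_filter]

lemma desN_ins {n : ℕ} (σ : Equiv.Perm (Fin n)) (p : Fin (n+1)) :
    desN (ins (σ, p)) = if (p:ℕ) < n ∧ ¬(1 ≤ (p:ℕ) ∧ pf σ (p:ℕ) < pf σ ((p:ℕ) - 1))
      then desN σ + 1 else desN σ := by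
  set q := (p:ℕ) with hq
  have hqn : q < n + 1 := p.isLt
  set F : ℕ → ℕ := fun j => if pf σ (j+1) < pf σ j then 1 else 0 with hF
  have hdσ : desN σ = ∑ j ∈ range (n-1), F j := desN_eq_sum σ
  have hdπ : desN (ins (σ, p)) = ∑ j ∈ range n,
      (if j+1 < q then F j else if j+1 = q then 0 else if j = q then 1 else F (j-1)) := by
    rw [desN_eq_sum, Nat.add_sub_cancel]
    refine Finset.sum_congr rfl fun j hj => ?_
    rw [Finset.mem_range] at hj
    rw [pf_ins σ p (by omega), pf_ins σ p (by omega)]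
    simp only [hF]
    have hb1 : pf σ j < n := pf_lt σ hj
    simp only [Nat.add_sub_cancel]
    rcases Nat.eq_zero_or_pos j with rfl | hj1
    · split_ifs <;> omega
    · rw [show j - 1 + 1 = j from by omega]
      split_ifs <;> omega
  rcases Nat.lt_or_ge q n with hlt | hge
  · -- q < n
    rw [hdπ, Finset.range_eq_Ico, ← Finset.sum_Ico_consecutive _ (Nat.zero_le q) (le_of_lt hlt),
      Finset.sum_eq_sum_Ico_succ_bot hlt]
    have e1 : (if q+1 < q then F q else if q+1 = q then 0 else if q = q then 1 else F (q-1)) = 1 := by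
      split_ifs <;> omega
    rw [e1]
    have e2 : ∑ j ∈ Finset.Ico (q+1) n,
        (if j+1 < q then F j else if j+1 = q then 0 else if j = q then 1 else F (j-1))
        = ∑ j ∈ Finset.Ico q (n-1), F j := by
      rw [Finset.sum_Ico_eq_sum_range, Finset.sum_Ico_eq_sum_range]
      have hn : n - (q+1) = n - 1 - q := by omega
      rw [hn]
      refine Finset.sum_congr rfl fun i hi => ?_
      rw [Finset.mem_range] at hi
      have c1 : ¬ (q+1+i+1 < q) := by omega
      have c2 : ¬ (q+1+i+1 = q) := by omega
      have c3 : ¬ (q+1+i = q) := by omega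
      rw [if_neg c1, if_neg c2, if_neg c3]
      congr 1
      omega
    rw [e2]
    rcases Nat.eq_zero_or_pos q with hq0 | hq0
    · rw [if_pos ⟨hlt, fun hc => absurd hc.1 (by omega)⟩]
      simp only [hq0, Finset.Ico_self, Finset.sum_empty, zero_add]
      rw [hdσ, Finset.range_eq_Ico]
      omega
    · -- q ≥ 1
      have hico : Finset.Ico (q-1) q = {q-1} := by
        ext x; simp only [Finset.mem_Ico, Finset.mem_singleton]; omega
      have hsplit0 : ∑ j ∈ Finset.Ico 0 q,
          (if j+1 < q then F j else if j+1 = q then 0 else if j = q then 1 else F (j-1))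
          = ∑ j ∈ Finset.Ico 0 (q-1), F j := by
        rw [← Finset.sum_Ico_consecutive _ (Nat.zero_le (q-1)) (by omega : q - 1 ≤ q)]
        have elast : ∑ j ∈ Finset.Ico (q-1) q,
            (if j+1 < q then F j else if j+1 = q then 0 else if j = q then 1 else F (j-1)) = 0 := by
          rw [hico, Finset.sum_singleton]
          split_ifs <;> omega
        rw [elast, add_zero]
        refine Finset.sum_congr rfl fun j hj => ?_
        rw [Finset.mem_Ico] at hj
        rw [if_pos (by omega)]
      rw [hsplit0]
      have hdσ2 : desN σ = (∑ j ∈ Finset.Ico 0 (q-1), F j) + F (q-1) + ∑ j ∈ Finset.Ico q (n-1), F j := by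
        rw [hdσ, Finset.range_eq_Ico,
          ← Finset.sum_Ico_consecutive _ (Nat.zero_le q) (by omega : q ≤ n - 1),
          ← Finset.sum_Ico_consecutive _ (Nat.zero_le (q-1)) (by omega : q - 1 ≤ q)]
        rw [hico, Finset.sum_singleton]
      have hFq : F (q-1) = if pf σ q < pf σ (q-1) then 1 else 0 := by
        simp only [hF]
        rw [show q - 1 + 1 = q from by omega]
      rw [hdσ2]
      by_cases hdesc : pf σ q < pf σ (q-1)
      · rw [if_neg (by intro hc; exact hc.2 ⟨hq0, hdesc⟩)]
        rw [hFq, if_pos hdesc]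
        ring
      · rw [if_pos ⟨hlt, by intro hc; exact hdesc hc.2⟩]
        rw [hFq, if_neg hdesc]
        ring
  · -- q = n
    have hqn' : q = n := by omega
    rw [if_neg (by omega), hdπ, hdσ]
    rcases Nat.eq_zero_or_pos n with hn0 | hn0
    · subst hn0; simp
    · rw [show n = (n-1) + 1 by omega, Finset.sum_range_succ]
      have : (if (n-1)+1 < q then F (n-1) else if (n-1)+1 = q then 0 else if (n-1) = q then 1
          else F ((n-1)-1)) = 0 := by
        split_ifs <;> omega
      rw [this, add_zero, Nat.add_sub_cancel]
      refine Finset.sum_congr rfl fun j hj => ?_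
      rw [Finset.mem_range] at hj
      rw [if_pos (by omega)]

lemma ins_injective {n : ℕ} : Function.Injective (@ins n) := by
  rintro ⟨σ, p⟩ ⟨τ, q⟩ h
  have hpf : ∀ i, pf (ins (σ, p)) i = pf (ins (τ, q)) i := fun i => by rw [h]
  have hp := p.isLt; have hq := q.isLt
  have hpq : (p:ℕ) = (q:ℕ) := by
    by_contra hne
    have e1 := hpf (p:ℕ)
    rw [pf_ins σ p p.isLt, pf_ins τ q p.isLt] at e1
    rw [if_neg (lt_irrefl _), if_pos rfl] at e1
    rcases Nat.lt_or_ge (p:ℕ) (q:ℕ) with hlt | hge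
    · rw [if_pos hlt] at e1
      have := pf_lt τ (show (p:ℕ) < n by omega)
      omega
    · rw [if_neg (by omega), if_neg hne] at e1
      have := pf_lt τ (show (p:ℕ) - 1 < n by omega)
      omega
  have hστ : σ = τ := by
    apply Equiv.ext
    intro x
    have hkey : ∀ i, i < n → pf σ i = pf τ i := by
      intro i hi
      rcases Nat.lt_or_ge i (p:ℕ) with hlt | hge
      · have e1 := hpf i
        rw [pf_ins σ p (by omega), pf_ins τ q (by omega), if_pos hlt,
          if_pos (hpq ▸ hlt)] at e1
        exact e1
      · have e1 := hpf (i+1)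
        rw [pf_ins σ p (by omega), pf_ins τ q (by omega), if_neg (by omega),
          if_neg (by omega), if_neg (by omega), if_neg (by omega),
          Nat.add_sub_cancel] at e1
        exact e1
    have := hkey x.val x.isLt
    rw [pf, pf, dif_pos x.isLt, dif_pos x.isLt] at this
    exact Fin.ext (by simpa using this)
  obtain rfl : p = q := Fin.ext hpq
  obtain rfl := hστ
  rfl

lemma ins_bijective {n : ℕ} : Function.Bijective (@ins n) := by
  rw [Fintype.bijective_iff_injective_and_card]
  refine ⟨ins_injective, ?_⟩
  rw [Fintype.card_prod, Fintype.card_perm, Fintype.card_perm, Fintype.card_fin,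
    Fintype.card_fin, Nat.factorial_succ, Nat.mul_comm]

lemma desN_le {n : ℕ} (σ : Equiv.Perm (Fin n)) : desN σ ≤ n := by
  calc desN σ ≤ (range (n-1)).card := Finset.card_filter_le _ _
    _ = n - 1 := Finset.card_range _
    _ ≤ n := Nat.sub_le _ _

lemma count_ins {n : ℕ} (σ : Equiv.Perm (Fin n)) :
    ((range (n+1)).filter
      (fun q => ¬(q < n ∧ ¬(1 ≤ q ∧ pf σ q < pf σ (q - 1))))).card = desN σ + 1 := by
  have hset : (range (n+1)).filter
      (fun q => ¬(q < n ∧ ¬(1 ≤ q ∧ pf σ q < pf σ (q - 1))))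
      = insert n (((range (n-1)).filter (fun i => pf σ (i+1) < pf σ i)).image (· + 1)) := by
    ext q
    simp only [Finset.mem_filter, Finset.mem_range, Finset.mem_insert, Finset.mem_image]
    constructor
    · rintro ⟨hq, hcond⟩
      by_cases hqn : q = n
      · exact Or.inl hqn
      · right
        have hqlt : q < n := by omega
        have h3 : 1 ≤ q ∧ pf σ q < pf σ (q-1) := by
          by_contra hc
          exact hcond ⟨hqlt, hc⟩
        refine ⟨q - 1, ⟨?_, ?_⟩, by omega⟩
        · omega
        · rw [show q - 1 + 1 = q from by omega]
          exact h3.2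
    · rintro (rfl | ⟨i, ⟨hi, hd⟩, rfl⟩)
      · exact ⟨by omega, fun hc => absurd hc.1 (lt_irrefl _)⟩
      · refine ⟨by omega, fun hc => hc.2 ⟨by omega, ?_⟩⟩
        rw [show i + 1 - 1 = i from by omega]
        exact hd
  rw [hset, Finset.card_insert_of_notMem, Finset.card_image_of_injective _
    (add_left_injective 1), desN]
  intro hmem
  rw [Finset.mem_image] at hmem
  obtain ⟨i, hi, he⟩ := hmem
  rw [Finset.mem_filter, Finset.mem_range] at hi
  omega

lemma eulerPoly_succ (R : Type*) [CommRing R] (n : ℕ) (t : R) :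
    eulerPoly R (n+1) t = ∑ σ : Equiv.Perm (Fin n),
      (((desN σ + 1 : ℕ) : R) * t ^ desN σ + ((n - desN σ : ℕ) : R) * t ^ (desN σ + 1)) := by
  rw [eulerPoly, ← Function.Bijective.sum_comp ins_bijective (fun π => t ^ desN π),
    Fintype.sum_prod_type]
  refine Finset.sum_congr rfl fun σ _ => ?_
  have hterm : ∀ p : Fin (n+1), t ^ desN (ins (σ, p)) =
      (fun q : ℕ => if q < n ∧ ¬(1 ≤ q ∧ pf σ q < pf σ (q - 1)) then t ^ (desN σ + 1)
        else t ^ desN σ) (p : ℕ) := by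
    intro p
    rw [desN_ins, apply_ite (t ^ ·)]
  have hstep : ∑ p : Fin (n+1), t ^ desN (ins (σ, p)) = ∑ q ∈ range (n+1),
      (if q < n ∧ ¬(1 ≤ q ∧ pf σ q < pf σ (q - 1)) then t ^ (desN σ + 1)
        else t ^ desN σ) := by
    rw [← Fin.sum_univ_eq_sum_range]
    exact Finset.sum_congr rfl fun p _ => hterm p
  rw [hstep, Finset.sum_ite, Finset.sum_const, Finset.sum_const]
  have h2 := count_ins σ
  have h1 : ((range (n+1)).filter
      (fun q => q < n ∧ ¬(1 ≤ q ∧ pf σ q < pf σ (q - 1)))).card = n - desN σ := by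
    have htot := Finset.card_filter_add_card_filter_not (s := range (n+1))
      (p := fun q => q < n ∧ ¬(1 ≤ q ∧ pf σ q < pf σ (q - 1)))
    beta_reduce at htot
    rw [h2, Finset.card_range] at htot
    have hle := desN_le σ
    omega
  rw [h1, h2, nsmul_eq_mul, nsmul_eq_mul]
  push_cast
  ring

open Polynomial in
noncomputable def Ap (R : Type*) [CommRing R] (n : ℕ) : Polynomial R :=
  eulerPoly (Polynomial R) n X

open Polynomial in
lemma X_mul_derivative_Ap (R : Type*) [CommRing R] (n : ℕ) :
    X * derivative (Ap R n) = ∑ σ : Equiv.Perm (Fin n), ((desN σ : Polynomial R) * X ^ desN σ) := by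
  rw [Ap, eulerPoly, derivative_sum, Finset.mul_sum]
  refine Finset.sum_congr rfl fun σ _ => ?_
  rw [derivative_X_pow, C_eq_natCast]
  rcases Nat.eq_zero_or_pos (desN σ) with h | h
  · rw [h]; simp
  · rw [show desN σ = (desN σ - 1) + 1 from by omega]
    simp only [Nat.add_sub_cancel]
    push_cast
    rw [pow_succ]
    ring

open Polynomial in
lemma Ap_succ (R : Type*) [CommRing R] (n : ℕ) :
    Ap R (n+1) = Ap R n + X * derivative (Ap R n) + (n : Polynomial R) * (X * Ap R n)
      - X * (X * derivative (Ap R n)) := by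
  rw [Ap, eulerPoly_succ, X_mul_derivative_Ap]
  rw [Ap, eulerPoly]
  rw [Finset.mul_sum, Finset.mul_sum, Finset.mul_sum]
  rw [← Finset.sum_add_distrib, ← Finset.sum_add_distrib, ← Finset.sum_sub_distrib]
  refine Finset.sum_congr rfl fun σ _ => ?_
  have hle := desN_le σ
  rw [Nat.cast_sub hle]
  push_cast
  rw [pow_succ]
  ring

open Polynomial

noncomputable def Sp (R : Type*) [CommRing R] (n : ℕ) : Polynomial R :=
  ∑ k ∈ range (n+1), (n.choose k : Polynomial R) * (X - 1)^k * Ap R (n-k)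

lemma Sp_pascal (R : Type*) [CommRing R] (n : ℕ) :
    Sp R (n+1) = (∑ k ∈ range (n+1), (n.choose k : Polynomial R) * (X-1)^k * Ap R (n-k+1))
      + (X-1) * Sp R n := by
  rw [Sp, Finset.sum_range_succ']
  have hsplit : ∀ i ∈ range (n+1),
      (((n+1).choose (i+1) : Polynomial R)) * (X-1)^(i+1) * Ap R (n+1-(i+1))
      = (X-1) * ((n.choose i : Polynomial R) * (X-1)^i * Ap R (n-i))
        + (n.choose (i+1) : Polynomial R) * (X-1)^(i+1) * Ap R (n-i) := by
    intro i hi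
    rw [Nat.choose_succ_succ, show n+1-(i+1) = n-i from by omega]
    push_cast
    rw [pow_succ]
    ring
  rw [Finset.sum_congr rfl hsplit, Finset.sum_add_distrib, ← Finset.mul_sum, ← Sp]
  simp only [Nat.choose_zero_right, Nat.cast_one, one_mul, Nat.sub_zero, pow_zero]
  have hP : (∑ k ∈ range (n+1), ((n.choose k : Polynomial R)) * (X-1)^k * Ap R (n-k+1))
      = (∑ i ∈ range (n+1), (n.choose (i+1) : Polynomial R) * (X-1)^(i+1) * Ap R (n-i))
        + Ap R (n+1) := by
    rw [Finset.sum_range_succ']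
    congr 1
    · rw [Finset.sum_range_succ, Nat.choose_succ_self]
      push_cast
      rw [zero_mul, zero_mul, add_zero]
      refine Finset.sum_congr rfl fun i hi => ?_
      rw [Finset.mem_range] at hi
      rw [show n-(i+1)+1 = n-i from by omega]
    · simp
  rw [hP]
  ring

lemma Sp_succ (R : Type*) [CommRing R] (n : ℕ) :
    Sp R (n+1) = ((n : Polynomial R)+1) * (X * Sp R n)
      - X * ((X-1) * derivative (Sp R n)) := by
  have hQK : derivative (Sp R n)
      = (∑ k ∈ range (n+1), (n.choose k : Polynomial R) * (k : Polynomial R) * (X-1)^(k-1)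
          * Ap R (n-k))
        + ∑ k ∈ range (n+1), (n.choose k : Polynomial R) * (X-1)^k
          * derivative (Ap R (n-k)) := by
    rw [Sp, derivative_sum, ← Finset.sum_add_distrib]
    refine Finset.sum_congr rfl fun k hk => ?_
    rw [derivative_mul, derivative_mul, derivative_natCast, derivative_pow, derivative_sub,
      derivative_X, derivative_one, sub_zero, mul_one, C_eq_natCast]
    ring
  have hW : (∑ k ∈ range (n+1), (n.choose k : Polynomial R) * ((n-k : ℕ) : Polynomial R)
        * (X-1)^k * Ap R (n-k))
      = (n : Polynomial R) * Sp R n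
        - (X-1) * ∑ k ∈ range (n+1), (n.choose k : Polynomial R) * (k : Polynomial R)
          * (X-1)^(k-1) * Ap R (n-k) := by
    rw [Sp, Finset.mul_sum, Finset.mul_sum, ← Finset.sum_sub_distrib]
    refine Finset.sum_congr rfl fun k hk => ?_
    rw [Finset.mem_range] at hk
    rw [Nat.cast_sub (by omega : k ≤ n)]
    rcases Nat.eq_zero_or_pos k with rfl | hkpos
    · norm_num
    · rw [show k = (k-1)+1 from by omega]
      simp only [Nat.add_sub_cancel]
      rw [pow_succ]
      push_cast
      ring
  have hPval : (∑ k ∈ range (n+1), (n.choose k : Polynomial R) * (X-1)^k * Ap R (n-k+1))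
      = Sp R n
        + X * (∑ k ∈ range (n+1), (n.choose k : Polynomial R) * (X-1)^k
            * derivative (Ap R (n-k)))
        + X * (∑ k ∈ range (n+1), (n.choose k : Polynomial R) * ((n-k : ℕ) : Polynomial R)
            * (X-1)^k * Ap R (n-k))
        - X * (X * (∑ k ∈ range (n+1), (n.choose k : Polynomial R) * (X-1)^k
            * derivative (Ap R (n-k)))) := by
    have hterm : ∀ k ∈ range (n+1),
        (n.choose k : Polynomial R) * (X-1)^k * Ap R (n-k+1)
        = (n.choose k : Polynomial R) * (X-1)^k * Ap R (n-k)
          + X * ((n.choose k : Polynomial R) * (X-1)^k * derivative (Ap R (n-k)))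
          + X * ((n.choose k : Polynomial R) * ((n-k : ℕ) : Polynomial R) * (X-1)^k
              * Ap R (n-k))
          - X * (X * ((n.choose k : Polynomial R) * (X-1)^k * derivative (Ap R (n-k)))) := by
      intro k hk
      rw [Ap_succ]
      ring
    rw [Finset.sum_congr rfl hterm, Finset.sum_sub_distrib, Finset.sum_add_distrib,
      Finset.sum_add_distrib]
    simp only [← Finset.mul_sum]
    rw [← Sp]
  rw [Sp_pascal, hPval, hW, hQK]
  ring

lemma Ap_zero (R : Type*) [CommRing R] : Ap R 0 = 1 := by
  rw [Ap, eulerPoly]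
  have h : ∀ π : Equiv.Perm (Fin 0), desN π = 0 := fun π => by
    rw [desN]; simp
  simp [h]

lemma Ap_one (R : Type*) [CommRing R] : Ap R 1 = 1 := by
  rw [Ap, eulerPoly]
  have h : ∀ π : Equiv.Perm (Fin 1), desN π = 0 := fun π => by
    rw [desN]; simp
  simp [h]

lemma Sp_eq (R : Type*) [CommRing R] (n : ℕ) (hn : 1 ≤ n) : Sp R n = X * Ap R n := by
  induction n, hn using Nat.le_induction with
  | base =>
    rw [Sp, Finset.sum_range_succ, Finset.sum_range_succ, Finset.sum_range_zero]
    simp only [Ap_zero, Ap_one, Nat.choose_self, Nat.choose_zero_right, Nat.cast_one,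
      pow_zero, pow_one, Nat.sub_self, Nat.sub_zero, one_mul, mul_one, zero_add]
    ring
  | succ n hn ih =>
    rw [Sp_succ, ih, derivative_mul, derivative_X, Ap_succ]
    ring

lemma eval_Ap {K : Type*} [CommRing K] (t : K) (n : ℕ) :
    (Ap K n).eval t = eulerPoly K n t := by
  rw [Ap, eulerPoly, eulerPoly, Polynomial.eval_finset_sum]
  exact Finset.sum_congr rfl fun σ _ => by rw [eval_pow, eval_X]

lemma eulerPoly_zero {K : Type*} [CommRing K] (t : K) : eulerPoly K 0 t = 1 := by
  rw [← eval_Ap, Ap_zero, eval_one]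

lemma key_identity {K : Type*} [CommRing K] (t : K) (n : ℕ) (hn : 1 ≤ n) :
    ∑ k ∈ range (n+1), (n.choose k : K) * (t-1)^k * eulerPoly K (n-k) t
      = t * eulerPoly K n t := by
  have h := congrArg (Polynomial.eval t) (Sp_eq K n hn)
  rw [Sp, Polynomial.eval_finset_sum, Polynomial.eval_mul, eval_X] at h
  rw [← eval_Ap t n, ← h]
  refine Finset.sum_congr rfl fun k _ => ?_
  rw [eval_mul, eval_mul, eval_pow, eval_sub, eval_X, eval_one, eval_natCast, eval_Ap]

lemma key_scaled {K : Type*} [CommRing K] (t : K) (n : ℕ) (hn : 1 ≤ n) :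
    ∑ k ∈ range (n+1), (n.choose k : K) * (t^2-1)^k * ((1+t)^(n-k) * eulerPoly K (n-k) t)
      = t * ((1+t)^n * eulerPoly K n t) := by
  have hfac : ∀ k ∈ range (n+1), (n.choose k : K) * (t^2-1)^k * ((1+t)^(n-k) * eulerPoly K (n-k) t)
      = (1+t)^n * ((n.choose k : K) * (t-1)^k * eulerPoly K (n-k) t) := by
    intro k hk
    rw [Finset.mem_range] at hk
    have h1 : t^2 - 1 = (t-1) * (1+t) := by ring
    rw [h1, mul_pow]
    have h2 : (1+t)^k * (1+t)^(n-k) = (1+t)^n := by rw [← pow_add]; congr 1; omega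
    linear_combination ((n.choose k : K) * (t-1)^k * eulerPoly K (n-k) t) * h2
  rw [Finset.sum_congr rfl hfac, ← Finset.mul_sum, key_identity t n hn]
  ring

section Series

variable {K : Type*} [Field K] [CharZero K]

lemma fact_ne (n : ℕ) : ((n.factorial : K)) ≠ 0 := by
  exact_mod_cast Nat.cast_ne_zero.mpr n.factorial_ne_zero

lemma div_fact_mul_div_fact (a b : K) {k n : ℕ} (hk : k ≤ n) :
    (a / k.factorial) * (b / (n-k).factorial) = (n.choose k : K) * a * b / n.factorial := by
  have h : ((n.choose k : ℕ) : K) * (k.factorial : K) * ((n-k).factorial : K)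
      = (n.factorial : K) := by
    exact_mod_cast congrArg (Nat.cast (R := K)) (Nat.choose_mul_factorial_mul_factorial hk)
  rw [div_mul_div_comm, div_eq_div_iff (mul_ne_zero (fact_ne k) (fact_ne (n-k))) (fact_ne n)]
  linear_combination (-(a * b)) * h

lemma L2 (t : K) :
    (PowerSeries.C t - PowerSeries.mk (fun n => (t ^ 2 - 1) ^ n / (n.factorial : K))) *
      PowerSeries.mk (fun n => (1+t)^n * eulerPoly K n t / (n.factorial : K))
    = PowerSeries.C t - 1 := by
  ext n
  rw [sub_mul, map_sub, map_sub, PowerSeries.coeff_C_mul, PowerSeries.coeff_mk,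
    PowerSeries.coeff_mul, PowerSeries.coeff_C, PowerSeries.coeff_one]
  simp only [PowerSeries.coeff_mk]
  rw [Finset.Nat.sum_antidiagonal_eq_sum_range_succ_mk]
  rcases Nat.eq_zero_or_pos n with rfl | hn
  · simp [eulerPoly_zero]
  · have hsum : ∑ k ∈ range (n+1),
        ((t^2-1)^k / (k.factorial : K)) * ((1+t)^(n-k) * eulerPoly K (n-k) t / ((n-k).factorial : K))
        = ∑ k ∈ range (n+1),
          (n.choose k : K) * (t^2-1)^k * ((1+t)^(n-k) * eulerPoly K (n-k) t) / (n.factorial : K) := by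
      refine Finset.sum_congr rfl fun k hk => ?_
      rw [Finset.mem_range] at hk
      exact div_fact_mul_div_fact _ _ (by omega)
    rw [hsum, ← Finset.sum_div]
    rw [key_scaled t n hn]
    rw [if_neg (by omega), if_neg (by omega)]
    field_simp
    simp

lemma L3 (t : K) :
    PowerSeries.mk (fun n => (t ^ 2 - 1) ^ n / (n.factorial : K)) *
      PowerSeries.mk (fun n => 1 / (n.factorial : K))
    = PowerSeries.mk (fun n => (t ^ 2) ^ n / (n.factorial : K)) := by
  ext n
  rw [PowerSeries.coeff_mul, PowerSeries.coeff_mk, Finset.Nat.sum_antidiagonal_eq_sum_range_succ_mk]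
  simp only [PowerSeries.coeff_mk]
  have hsum : ∑ k ∈ range (n+1),
      ((t^2-1)^k / (k.factorial : K)) * (1 / ((n-k).factorial : K))
      = ∑ k ∈ range (n+1), (n.choose k : K) * (t^2-1)^k * 1 / (n.factorial : K) := by
    refine Finset.sum_congr rfl fun k hk => ?_
    rw [Finset.mem_range] at hk
    exact div_fact_mul_div_fact _ _ (by omega)
  rw [hsum, ← Finset.sum_div]
  have hpow : (t^2)^n = ∑ k ∈ range (n+1), (t^2-1)^k * 1^(n-k) * (n.choose k : K) := by
    rw [← add_pow]
    norm_num
  rw [hpow]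
  congr 1
  refine Finset.sum_congr rfl fun k hk => ?_
  ring

end Series

section Series2

variable {K : Type*} [Field K] [CharZero K]

lemma L1 (t : K) :
    PowerSeries.mk (fun n => Astar K n t / (n.factorial : K))
    = PowerSeries.mk (fun n => 1 / (n.factorial : K))
      - PowerSeries.C t * PowerSeries.mk (fun n => 1 / (n.factorial : K))
      + PowerSeries.C t *
        (PowerSeries.mk (fun n => (1+t)^n * eulerPoly K n t / (n.factorial : K))
          * PowerSeries.mk (fun n => 1 / (n.factorial : K))) := by
  ext n
  rw [map_add, map_sub, PowerSeries.coeff_C_mul, PowerSeries.coeff_C_mul, PowerSeries.coeff_mul,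
    Finset.Nat.sum_antidiagonal_eq_sum_range_succ_mk]
  simp only [PowerSeries.coeff_mk]
  have hsum : ∑ k ∈ range (n+1),
      ((1+t)^k * eulerPoly K k t / (k.factorial : K)) * (1/((n-k).factorial : K))
      = ∑ k ∈ range (n+1),
        (n.choose k : K) * ((1+t)^k * eulerPoly K k t) * 1 / (n.factorial : K) := by
    refine Finset.sum_congr rfl fun k hk => ?_
    rw [Finset.mem_range] at hk
    exact div_fact_mul_div_fact _ _ (by omega)
  rw [hsum, ← Finset.sum_div]
  have hA : Astar K n t
      = 1 - t + t * ∑ k ∈ range (n+1), (n.choose k : K) * ((1+t)^k * eulerPoly K k t) * 1 := by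
    rw [Astar]
    have hr : range (n+1) = insert 0 (Icc 1 n) := by
      ext x
      simp only [Finset.mem_range, Finset.mem_Icc, Finset.mem_insert]
      omega
    rw [hr, Finset.sum_insert (by simp)]
    rw [eulerPoly_zero]
    have : ∀ k ∈ Icc 1 n, (n.choose k : K) * ((1+t)^k * eulerPoly K k t) * 1
        = (n.choose k : K) * (1+t)^k * eulerPoly K k t := fun k _ => by ring
    rw [Finset.sum_congr rfl this]
    simp
    ring
  rw [hA]
  field_simp

theorem stmt13' (t : K) :
    (PowerSeries.C t - PowerSeries.mk (fun n => (t ^ 2 - 1) ^ n / (n.factorial : K))) *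
      PowerSeries.mk (fun n => Astar K n t / (n.factorial : K)) =
    (PowerSeries.C t - 1) *
      PowerSeries.mk (fun n => (t ^ 2) ^ n / (n.factorial : K)) := by
  have l1 := L1 t
  have l2 := L2 t
  have l3 := L3 t
  rw [l1]
  linear_combination (PowerSeries.C t * PowerSeries.mk (fun n => 1 / (n.factorial : K))) * l2
    + (PowerSeries.C t - 1) * l3

end Series2

/-- the EGF identity `∑ A*_n(t) x^n/n! = (t-1)e^{t²x}/(t - e^{(t²-1)x})`,
stated in cross-multiplied form in `PowerSeries K`. -/
theorem stmt13 {K : Type*} [Field K] [CharZero K] (t : K) :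
    (PowerSeries.C t - PowerSeries.mk (fun n => (t ^ 2 - 1) ^ n / (n.factorial : K))) *
      PowerSeries.mk (fun n => Astar K n t / (n.factorial : K)) =
    (PowerSeries.C t - 1) *
      PowerSeries.mk (fun n => (t ^ 2) ^ n / (n.factorial : K)) := by
  exact stmt13' t
end
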